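/- arXiv:1505.05740 — 2 statements merged into one kernel-verified Lean document; each statement's English description precedes it below -/
import Mathlib

section
/- Let V1, V2, E1, E2 be finite types with head and tail maps s1, t1 : E1 → V1 and s2, t2 : E2 → V2. Let x : V1 → V2 → ℝ and y : E1 → E2 → ℝ be binary (every value is 0 or 1), and suppose the edge-budget constraint holds: for every ij ∈ E1, ∑_{kl ∈ E2} y ij kl ≤ 1. Then the following are equivalent: (a) for all ij ∈ E1 and kl ∈ E2, y ij kl ≤ x (s1 ij) (s2 kl) and y ij kl ≤ x (t1 ij) (t2 kl); (b) for all ij ∈ E1 and k ∈ V2, ∑_{kl ∈ E2 with s2 kl = k} y ij kl ≤ x (s1 ij) k, and for all ij ∈ E1 and l ∈ V2, ∑_{kl ∈ E2 with t2 kl = l} y ij kl ≤ x (t1 ij) l. (Proposition 2: the pointwise topological constraints (7)-(8) and the aggregated topological constraints (13)-(14) define the same set of admissible solutions.) -/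
/-!
A binary edge variable `y ij kl` is `1` for at most one `kl`, by the budget constraint. Hence the
sum of `y ij` over the edges `kl` with a given head `k` is either `0`, which is below any binary
`x`, or a single `1`, which the pointwise constraint already bounds by `x (s1 ij) k`. Conversely each
summand is bounded by the whole (nonnegative) sum.
-/

open Finset

lemma sum_le_of_forall_le_of_binary {ι : Type*} {s : Finset ι} {g : ι → ℝ} {c : ℝ}
    (hg : ∀ i ∈ s, g i = 0 ∨ g i = 1) (hsum : ∑ i ∈ s, g i ≤ 1) (hc : 0 ≤ c)
    (hle : ∀ i ∈ s, g i ≤ c) : ∑ i ∈ s, g i ≤ c := by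
  by_cases hone : ∃ i ∈ s, g i = 1
  · obtain ⟨i, hi, hgi⟩ := hone
    exact hsum.trans (hgi ▸ hle i hi)
  · push Not at hone
    have hzero : ∀ i ∈ s, g i = 0 := fun i hi => (hg i hi).resolve_right (hone i hi)
    rwa [sum_eq_zero hzero]

lemma forall_le_comp_iff_sum_fiber_le {ι κ : Type*} [Fintype ι] [DecidableEq κ]
    (f : ι → κ) {g : ι → ℝ} {c : κ → ℝ} (hg : ∀ i, g i = 0 ∨ g i = 1)
    (hsum : ∑ i, g i ≤ 1) (hc : ∀ k, 0 ≤ c k) :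
    (∀ i, g i ≤ c (f i)) ↔ ∀ k, ∑ i ∈ univ.filter (fun i => f i = k), g i ≤ c k := by
  have hg_nonneg : ∀ i, 0 ≤ g i := fun i => by rcases hg i with h | h <;> simp [h]
  constructor
  · intro hle k
    refine sum_le_of_forall_le_of_binary (fun i _ => hg i)
      ((sum_le_univ_sum_of_nonneg hg_nonneg).trans hsum) (hc k) fun i hi => ?_
    exact (mem_filter.mp hi).2 ▸ hle i
  · intro hfiber i
    exact (single_le_sum (fun j _ => hg_nonneg j) (by simp)).trans (hfiber (f i))

theorem prop2_equiv_constraints_general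
    (V1 V2 E1 E2 : Type*) [Fintype E2] [DecidableEq V2]
    (s1 t1 : E1 → V1) (s2 t2 : E2 → V2)
    (x : V1 → V2 → ℝ) (y : E1 → E2 → ℝ)
    (hx : ∀ i k, x i k = 0 ∨ x i k = 1)
    (hy : ∀ ij kl, y ij kl = 0 ∨ y ij kl = 1)
    (hbudget : ∀ ij : E1, ∑ kl : E2, y ij kl ≤ 1) :
    (∀ (ij : E1) (kl : E2),
        y ij kl ≤ x (s1 ij) (s2 kl) ∧ y ij kl ≤ x (t1 ij) (t2 kl)) ↔
    ((∀ (ij : E1) (k : V2),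
        ∑ kl ∈ Finset.univ.filter (fun kl : E2 => s2 kl = k), y ij kl ≤ x (s1 ij) k) ∧
     (∀ (ij : E1) (l : V2),
        ∑ kl ∈ Finset.univ.filter (fun kl : E2 => t2 kl = l), y ij kl ≤ x (t1 ij) l)) := by
  have hx_nonneg : ∀ i k, 0 ≤ x i k := fun i k => by rcases hx i k with h | h <;> simp [h]
  simp only [forall_and]
  refine and_congr (forall_congr' fun ij => ?_) (forall_congr' fun ij => ?_)
  · exact forall_le_comp_iff_sum_fiber_le s2 (hy ij) (hbudget ij) (hx_nonneg (s1 ij))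
  · exact forall_le_comp_iff_sum_fiber_le t2 (hy ij) (hbudget ij) (hx_nonneg (t1 ij))

/-- Proposition 2: for binary variables satisfying the edge-budget constraint,
the pointwise topological constraints (7)-(8) are equivalent to the aggregated
topological constraints (13)-(14). -/
theorem prop2_equiv_constraints
    (V1 V2 E1 E2 : Type*) [Fintype V1] [Fintype V2] [Fintype E1] [Fintype E2] [DecidableEq V2]
    (s1 t1 : E1 → V1) (s2 t2 : E2 → V2)
    (x : V1 → V2 → ℝ) (y : E1 → E2 → ℝ)
    (hx : ∀ i k, x i k = 0 ∨ x i k = 1)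
    (hy : ∀ ij kl, y ij kl = 0 ∨ y ij kl = 1)
    (hbudget : ∀ ij : E1, ∑ kl : E2, y ij kl ≤ 1) :
    (∀ (ij : E1) (kl : E2),
        y ij kl ≤ x (s1 ij) (s2 kl) ∧ y ij kl ≤ x (t1 ij) (t2 kl)) ↔
    ((∀ (ij : E1) (k : V2),
        ∑ kl ∈ Finset.univ.filter (fun kl : E2 => s2 kl = k), y ij kl ≤ x (s1 ij) k) ∧
     (∀ (ij : E1) (l : V2),
        ∑ kl ∈ Finset.univ.filter (fun kl : E2 => t2 kl = l), y ij kl ≤ x (t1 ij) l)) :=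
  prop2_equiv_constraints_general V1 V2 E1 E2 s1 t1 s2 t2 x y hx hy hbudget
end

section
/- Let V1, V2, E1, E2 be finite types with head and tail maps s1, t1 : E1 → V1 and s2, t2 : E2 → V2, and suppose G1 is simple, i.e. the map ij ↦ (s1 ij, t1 ij) from E1 to V1 × V1 is injective. Let x : V1 → V2 → ℝ and y : E1 → E2 → ℝ be binary (every value is 0 or 1) and satisfy: for every k ∈ V2, ∑_{i ∈ V1} x i k ≤ 1; for every ij ∈ E1 and every k ∈ V2, ∑_{kl ∈ E2 with s2 kl = k} y ij kl ≤ x (s1 ij) k; and for every ij ∈ E1 and every l ∈ V2, ∑_{kl ∈ E2 with t2 kl = l} y ij kl ≤ x (t1 ij) l. Then for every kl ∈ E2, ∑_{ij ∈ E1} y ij kl ≤ 1. (The remaining edge-matching constraint (sumy2b) of formulation F1 is implied by the constraints kept in the reduced formulation F2, so F2 describes the same set of edit paths.) -/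
/-!
An edge `kl` of `G2` can be matched only to edges `ij` of `G1` whose head is matched to the head
of `kl` and whose tail is matched to the tail of `kl`. Each vertex of `G2` is the image of at most
one vertex of `G1`, so such an `ij` has a prescribed head and tail, and simplicity of `G1` leaves
at most one of them.
-/

open Finset

section Binary

variable {ι R : Type*} [Semiring R] [PartialOrder R] [IsStrictOrderedRing R]

theorem nonneg_of_binary {r : R} (hr : r = 0 ∨ r = 1) : 0 ≤ r := by
  rcases hr with rfl | rfl <;> simp

theorem sum_le_one_iff_of_binary [Fintype ι] {f : ι → R} (hf : ∀ i, f i = 0 ∨ f i = 1) :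
    ∑ i, f i ≤ 1 ↔ ∀ i j, f i = 1 → f j = 1 → i = j := by
  classical
  constructor
  · intro hsum i j hi hj
    by_contra hne
    have hpair : f i + f j ≤ ∑ k, f k := by
      rw [← sum_pair hne]
      exact sum_le_sum_of_subset_of_nonneg (subset_univ _) fun k _ _ => nonneg_of_binary (hf k)
    rw [hi, hj] at hpair
    exact (lt_add_of_pos_right 1 one_pos).not_ge (hpair.trans hsum)
  · intro hunique
    by_cases hone : ∃ i, f i = 1
    · obtain ⟨i, hi⟩ := hone
      rw [sum_eq_single i (fun j _ hji => (hf j).resolve_right fun hj => hji (hunique j i hj hi))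
        (by simp)]
      exact hi.le
    · push Not at hone
      simp [fun i => (hf i).resolve_right (hone i)]

theorem eq_one_of_sum_le_of_mem {s : Finset ι} {g : ι → R} {a : ι} {b : R}
    (hb : b = 0 ∨ b = 1) (hsum : ∑ i ∈ s, g i ≤ b) (hg : ∀ i ∈ s, 0 ≤ g i) (ha : a ∈ s)
    (hga : g a = 1) : b = 1 := by
  have hle : 1 ≤ b := hga ▸ (single_le_sum hg ha).trans hsum
  exact hb.resolve_left (zero_lt_one.trans_le hle).ne'

end Binary

theorem sumy2b_from_F2_constraints_general
    (V1 V2 E1 E2 : Type*) [Fintype V1] [Fintype E1] [Fintype E2] [DecidableEq V2]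
    (s1 t1 : E1 → V1) (s2 t2 : E2 → V2)
    (hsimple : Function.Injective (fun ij : E1 => (s1 ij, t1 ij)))
    (x : V1 → V2 → ℝ) (y : E1 → E2 → ℝ)
    (hx : ∀ i k, x i k = 0 ∨ x i k = 1)
    (hy : ∀ ij kl, y ij kl = 0 ∨ y ij kl = 1)
    (hvx : ∀ k : V2, ∑ i : V1, x i k ≤ 1)
    (hhead : ∀ (ij : E1) (k : V2),
        ∑ kl ∈ Finset.univ.filter (fun kl : E2 => s2 kl = k), y ij kl ≤ x (s1 ij) k)
    (htail : ∀ (ij : E1) (l : V2),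
        ∑ kl ∈ Finset.univ.filter (fun kl : E2 => t2 kl = l), y ij kl ≤ x (t1 ij) l) :
    ∀ kl : E2, ∑ ij : E1, y ij kl ≤ 1 := by
  intro kl
  have head_matched : ∀ ij, y ij kl = 1 → x (s1 ij) (s2 kl) = 1 := fun ij h =>
    eq_one_of_sum_le_of_mem (hx _ _) (hhead ij (s2 kl)) (fun e _ => nonneg_of_binary (hy ij e)) (by simp) h
  have tail_matched : ∀ ij, y ij kl = 1 → x (t1 ij) (t2 kl) = 1 := fun ij h =>
    eq_one_of_sum_le_of_mem (hx _ _) (htail ij (t2 kl)) (fun e _ => nonneg_of_binary (hy ij e)) (by simp) h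
  have head_unique := (sum_le_one_iff_of_binary (hx · (s2 kl))).1 (hvx _)
  have tail_unique := (sum_le_one_iff_of_binary (hx · (t2 kl))).1 (hvx _)
  refine (sum_le_one_iff_of_binary (hy · kl)).2 fun a b ha hb => hsimple ?_
  exact Prod.ext (head_unique _ _ (head_matched a ha) (head_matched b hb))
    (tail_unique _ _ (tail_matched a ha) (tail_matched b hb))

/-- The remaining edge-matching constraint (sumy2b) of F1 is implied by the
constraints kept in the reduced formulation F2, when G1 is simple. -/
theorem sumy2b_from_F2_constraints
    (V1 V2 E1 E2 : Type*) [Fintype V1] [Fintype V2] [Fintype E1] [Fintype E2] [DecidableEq V2]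
    (s1 t1 : E1 → V1) (s2 t2 : E2 → V2)
    (hsimple : Function.Injective (fun ij : E1 => (s1 ij, t1 ij)))
    (x : V1 → V2 → ℝ) (y : E1 → E2 → ℝ)
    (hx : ∀ i k, x i k = 0 ∨ x i k = 1)
    (hy : ∀ ij kl, y ij kl = 0 ∨ y ij kl = 1)
    (hvx : ∀ k : V2, ∑ i : V1, x i k ≤ 1)
    (hhead : ∀ (ij : E1) (k : V2),
        ∑ kl ∈ Finset.univ.filter (fun kl : E2 => s2 kl = k), y ij kl ≤ x (s1 ij) k)
    (htail : ∀ (ij : E1) (l : V2),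
        ∑ kl ∈ Finset.univ.filter (fun kl : E2 => t2 kl = l), y ij kl ≤ x (t1 ij) l) :
    ∀ kl : E2, ∑ ij : E1, y ij kl ≤ 1 :=
  sumy2b_from_F2_constraints_general V1 V2 E1 E2 s1 t1 s2 t2 hsimple x y hx hy hvx hhead htail
end
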